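/- Let C be a small category (in universe u) equipped with a Grothendieck topology J. Then sheafification of type-valued presheaves commutes with universe enlargement: there is a natural isomorphism of functors (Cᵒᵖ ⥤ Type u) ⥤ Sheaf J (Type (max u v)) between presheafToSheaf J (Type u) followed by the functor Sheaf J (Type u) ⥤ Sheaf J (Type (max u v)) induced by postcomposition with uliftFunctor, and postcomposition with uliftFunctor on presheaves followed by presheafToSheaf J (Type (max u v)). In particular, for every presheaf P : Cᵒᵖ ⥤ Type u, the ulift of the sheafification of P is canonically isomorphic to the sheafification of the ulift of P. -/

import Mathlib

/-!
`uliftFunctor` preserves limits and filtered colimits, so it commutes with the plus construction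
`P ↦ P⁺` (a filtered colimit of multiequalizers) and hence with sheafification `P ↦ P⁺⁺`. In other
words it preserves sheafification, and comparing the two sheafification adjunctions through
`sheafCompose` gives the isomorphism.
-/

open CategoryTheory Limits

universe v u

instance GrothendieckTopology.preservesSheafification_uliftFunctor {C : Type u} [SmallCategory C]
    (J : GrothendieckTopology C) : J.PreservesSheafification uliftFunctor.{v, u} :=
  GrothendieckTopology.instPreservesSheafification J uliftFunctor.{v, u}

theorem statement15 {C : Type u} [SmallCategory C] (J : GrothendieckTopology C) :
    haveI : EssentiallySmall.{max u v} C := essentiallySmall_of_small_of_locallySmall.{max u v} C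
    haveI : HasSheafify J (Type (max u v)) :=
      hasSheafifyEssentiallySmallSite J (Type (max u v))
    Nonempty
      ((presheafToSheaf J (Type u) ⋙ sheafCompose J uliftFunctor.{v, u}) ≅
        ((Functor.whiskeringRight Cᵒᵖ (Type u) (Type (max u v))).obj uliftFunctor.{v, u} ⋙
          presheafToSheaf J (Type (max u v)))) := by
  exact ⟨(sheafComposeNatIso J uliftFunctor.{v, u} (sheafificationAdjunction J (Type u))
    (sheafificationAdjunction J (Type (max u v)))).symm⟩
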